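/- arXiv:2404.05778 — 2 statements merged into one kernel-verified Lean document; each statement's English description precedes it below -/
import Mathlib

section
/- Every k₂-Hausdorff topological space has unique sequential limits; that is, if the diagonal Δ_X is k₂-closed in X × X, and a sequence (aₙ) in X converges to both l₀ and l₁, then l₀ = l₁. -/
open Set Filter Topology

universe u

/-- A subset `C` of a space `X` is k₁-closed provided for every compact subset `K` of `X`,
the intersection `C ∩ K` is closed in the subspace topology on `K`. -/
def IsK1Closed {X : Type u} [TopologicalSpace X] (C : Set X) : Prop :=
  ∀ K : Set X, IsCompact K → IsClosed ((Subtype.val : K → X) ⁻¹' C)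

/-- A space is k₁-Hausdorff provided its diagonal is k₁-closed in its square. -/
def K1Hausdorff (X : Type u) [TopologicalSpace X] : Prop :=
  IsK1Closed {p : X × X | p.1 = p.2}

/-- A space is KC provided every compact subset is closed. -/
def KCSpace (X : Type u) [TopologicalSpace X] : Prop :=
  ∀ K : Set X, IsCompact K → IsClosed K

/-- A space `X` is weakly Hausdorff provided for every compact Hausdorff space `K` and
continuous `f : K → X`, the image of `f` is closed in `X`. -/
def WeaklyHausdorff (X : Type u) [TopologicalSpace X] : Prop :=
  ∀ (K : Type u) [TopologicalSpace K] [CompactSpace K] [T2Space K]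
    (f : K → X), Continuous f → IsClosed (Set.range f)

/-- A subset `C` of `X` is k₂-closed provided for every compact Hausdorff space `K` and
continuous `f : K → X`, the preimage `f ⁻¹' C` is closed in `K`. -/
def IsK2Closed {X : Type u} [TopologicalSpace X] (C : Set X) : Prop :=
  ∀ (K : Type u) [TopologicalSpace K] [CompactSpace K] [T2Space K]
    (f : K → X), Continuous f → IsClosed (f ⁻¹' C)

/-- A space is k₂-Hausdorff provided its diagonal is k₂-closed in its square. -/
def K2Hausdorff (X : Type u) [TopologicalSpace X] : Prop :=
  IsK2Closed {p : X × X | p.1 = p.2}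

/-- A space has unique sequential limits provided every convergent sequence has a unique limit. -/
def UniqueSequentialLimits (X : Type u) [TopologicalSpace X] : Prop :=
  ∀ (a : ℕ → X) (l₀ l₁ : X),
    Filter.Tendsto a Filter.atTop (nhds l₀) →
    Filter.Tendsto a Filter.atTop (nhds l₁) → l₀ = l₁

/- `IsK2Closed` only tests compact Hausdorff spaces in `Type u`; a space in `Type` is
reached through its `ULift`. -/
theorem IsK2Closed.isClosed_preimage {Y : Type u} [TopologicalSpace Y] {C : Set Y}
    (hC : IsK2Closed C) {K : Type} [TopologicalSpace K] [CompactSpace K] [T2Space K]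
    {f : K → Y} (hf : Continuous f) : IsClosed (f ⁻¹' C) := by
  have hlift : IsClosed ((f ∘ ULift.down.{u}) ⁻¹' C) := hC _ _ (hf.comp continuous_uliftDown)
  exact hlift.preimage continuous_uliftUp

/- A convergent sequence together with its limit is a continuous image of the one-point
compactification of `ℕ`, in which `∞` is a limit of the naturals. -/
theorem IsK2Closed.mem_of_tendsto {Y : Type u} [TopologicalSpace Y] {C : Set Y}
    (hC : IsK2Closed C) {a : ℕ → Y} {y : Y} (ha : Tendsto a atTop (𝓝 y)) (haC : ∀ n, a n ∈ C) :
    y ∈ C := by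
  let g := OnePoint.continuousMapMkNat a y ha
  have hclosed : IsClosed (g ⁻¹' C) := hC.isClosed_preimage g.continuous
  have hrange : range ((↑) : ℕ → OnePoint ℕ) ⊆ g ⁻¹' C := by
    rintro _ ⟨n, rfl⟩
    exact haC n
  exact hclosed.closure_subset_iff.mpr hrange (OnePoint.denseRange_coe OnePoint.infty)

/-- Every k₂-Hausdorff space has unique sequential limits. -/
theorem k2Hausdorff_implies_uniqueSequentialLimits (X : Type u) [TopologicalSpace X]
    (h : K2Hausdorff X) : UniqueSequentialLimits X := by
  intro a l₀ l₁ h₀ h₁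
  exact IsK2Closed.mem_of_tendsto h (h₀.prodMk_nhds h₁) fun _ => rfl
end

section
/- The one-point compactification of any KC topological space is k₂-Hausdorff; that is, if X is a topological space in which every compact subset is closed, and X⁺ = X ∪ {∞} is its one-point compactification, then the diagonal of X⁺ is k₂-closed in X⁺ × X⁺. -/
open Set Filter Topology

universe u

/-! A continuous image of a compact Hausdorff space in a KC space is Hausdorff, because the
corestriction is a closed map out of a normal space; so coincidence sets of maps from compact
Hausdorff spaces into a KC space are closed. For `g₁ g₂ : K → X⁺` and `k₀` in the closure of their
coincidence set with `g₂ k₀ ∈ X`, choose a compact neighbourhood `N` of `k₀` with `g₂ '' N ⊆ X`.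
Then `g₂ '' N` is compact, hence closed, in `X`, so it is closed in `X⁺`. Near `k₀` the coincidence
set lies in the compact set `N ∩ g₁ ⁻¹' (g₂ '' N)`, where both maps take values in `X`. -/

theorem IsClosedMap.t2Space_of_surjective {K Y : Type*} [TopologicalSpace K] [TopologicalSpace Y]
    [NormalSpace K] [T1Space Y] {f : K → Y} (hf : IsClosedMap f) (hcont : Continuous f)
    (hsurj : Function.Surjective f) : T2Space Y := by
  refine ⟨fun a b hab => ?_⟩
  obtain ⟨U, V, hU, hV, haU, hbV, hUV⟩ :=
    NormalSpace.normal _ _ (isClosed_singleton.preimage hcont) (isClosed_singleton.preimage hcont)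
      ((disjoint_singleton.2 hab).preimage f)
  refine ⟨kernImage f U, kernImage f V, isClosedMap_iff_kernImage.1 hf hU,
    isClosedMap_iff_kernImage.1 hf hV, haU, hbV,
    disjoint_left.2 fun y hyU hyV => ?_⟩
  obtain ⟨x, rfl⟩ := hsurj y
  exact disjoint_left.1 hUV (hyU rfl) (hyV rfl)

theorem mem_of_mem_closure_of_isClosed_inter {K : Type*} [TopologicalSpace K] {s N : Set K}
    {x : K} (hx : x ∈ closure s) (hN : N ∈ 𝓝 x) (hsN : IsClosed (N ∩ s)) : x ∈ s := by
  have hxN : x ∈ closure (N ∩ s) := mem_closure_iff_nhds.2 fun t ht => by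
    simpa only [inter_assoc] using mem_closure_iff_nhds.1 hx _ (inter_mem ht hN)
  exact (hsN.closure_subset hxN).2

namespace KCSpace

variable {X : Type u} [TopologicalSpace X]

theorem t1Space (hX : KCSpace X) : T1Space X :=
  ⟨fun _ => hX _ isCompact_singleton⟩

theorem subtype (hX : KCSpace X) (s : Set X) : KCSpace s := fun K hK =>
  Subtype.val_injective.preimage_image K ▸
    (hX _ (hK.image continuous_subtype_val)).preimage continuous_subtype_val

theorem isClosedMap {K : Type*} [TopologicalSpace K] [CompactSpace K] (hX : KCSpace X)
    {f : K → X} (hf : Continuous f) : IsClosedMap f :=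
  fun _ hs => hX _ (hs.isCompact.image hf)

theorem t2Space_range {K : Type*} [TopologicalSpace K] [CompactSpace K] [T2Space K]
    (hX : KCSpace X) {f : K → X} (hf : Continuous f) : T2Space (range f) :=
  haveI := (hX.subtype (range f)).t1Space
  ((hX.subtype (range f)).isClosedMap (hf.subtype_mk _)).t2Space_of_surjective
    (hf.subtype_mk _) rangeFactorization_surjective

theorem isClosed_setOf_eq {K : Type*} [TopologicalSpace K] [CompactSpace K] [T2Space K]
    (hX : KCSpace X) {g₁ g₂ : K → X} (h₁ : Continuous g₁) (h₂ : Continuous g₂) :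
    IsClosed {k | g₁ k = g₂ k} := by
  have := hX.t2Space_range (h₁.sumElim h₂)
  have m₁ : ∀ k, g₁ k ∈ range (Sum.elim g₁ g₂) := fun k => ⟨Sum.inl k, rfl⟩
  have m₂ : ∀ k, g₂ k ∈ range (Sum.elim g₁ g₂) := fun k => ⟨Sum.inr k, rfl⟩
  simpa only [Subtype.mk.injEq] using isClosed_eq (h₁.subtype_mk m₁) (h₂.subtype_mk m₂)

end KCSpace

namespace OnePoint

variable {X : Type u} [TopologicalSpace X]

theorem exists_continuous_lift {Y : Type*} [TopologicalSpace Y] {g : Y → OnePoint X}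
    (hg : Continuous g) (h : ∀ y, g y ≠ ∞) :
    ∃ u : Y → X, Continuous u ∧ ∀ y, (u y : OnePoint X) = g y := by
  choose u hu using fun y => ne_infty_iff_exists.1 (h y)
  refine ⟨u, isOpenEmbedding_coe.isEmbedding.continuous_iff.2 ?_, hu⟩
  exact (funext hu : (↑) ∘ u = g) ▸ hg

theorem isClosed_of_isCompact_of_infty_notMem (hX : KCSpace X) {s : Set (OnePoint X)}
    (hs : IsCompact s) (h : ∞ ∉ s) : IsClosed s := by
  have hcoe : IsCompact ((↑) ⁻¹' s : Set X) := by
    rw [isOpenEmbedding_coe.isEmbedding.isCompact_iff,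
      image_preimage_eq_of_subset fun x hx => ne_infty_iff_exists.1 (ne_of_mem_of_not_mem hx h)]
    exact hs
  exact (isClosed_iff_of_notMem h).2 ⟨hX _ hcoe, hcoe⟩

variable {K : Type*} [TopologicalSpace K] {g₁ g₂ : K → OnePoint X}

theorem isClosed_inter_setOf_eq [T2Space K] (hX : KCSpace X) (h₁ : Continuous g₁)
    (h₂ : Continuous g₂) {M : Set K} (hM : IsCompact M) (hM₁ : ∀ k ∈ M, g₁ k ≠ ∞)
    (hM₂ : ∀ k ∈ M, g₂ k ≠ ∞) : IsClosed (M ∩ {k | g₁ k = g₂ k}) := by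
  have := isCompact_iff_compactSpace.1 hM
  obtain ⟨u₁, hu₁, hg₁⟩ :=
    exists_continuous_lift (h₁.comp continuous_subtype_val) fun k => hM₁ k.1 k.2
  obtain ⟨u₂, hu₂, hg₂⟩ :=
    exists_continuous_lift (h₂.comp continuous_subtype_val) fun k => hM₂ k.1 k.2
  have hu : {k : M | u₁ k = u₂ k} = (↑) ⁻¹' {k | g₁ k = g₂ k} := by
    ext k
    exact coe_eq_coe.symm.trans (by rw [hg₁, hg₂]; rfl)
  rw [← Subtype.image_preimage_coe, ← hu]
  exact (hX.isClosed_setOf_eq hu₁ hu₂).trans hM.isClosed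

theorem eq_of_mem_closure_setOf_eq [T2Space K] [LocallyCompactSpace K] (hX : KCSpace X)
    (h₁ : Continuous g₁) (h₂ : Continuous g₂) {k₀ : K}
    (hk₀ : k₀ ∈ closure {k | g₁ k = g₂ k}) (hfin : g₂ k₀ ≠ ∞) : g₁ k₀ = g₂ k₀ := by
  obtain ⟨N, hN, hNfin, hNc⟩ :=
    local_compact_nhds <|
      h₂.continuousAt.preimage_mem_nhds (isClosed_infty.isOpen_compl.mem_nhds hfin)
  have hImg : IsClosed (g₂ '' N) := isClosed_of_isCompact_of_infty_notMem hX (hNc.image h₂)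
    fun ⟨k, hk, hk_infty⟩ => hNfin hk hk_infty
  have hM : IsClosed ((N ∩ g₁ ⁻¹' (g₂ '' N)) ∩ {k | g₁ k = g₂ k}) :=
    isClosed_inter_setOf_eq hX h₁ h₂ (hNc.inter_right (hImg.preimage h₁))
      (fun _ ⟨_, ⟨k', hk', hk'k⟩⟩ hk_infty => hNfin hk' (hk'k.trans hk_infty))
      fun _ hk => hNfin hk.1
  have hMN : (N ∩ g₁ ⁻¹' (g₂ '' N)) ∩ {k | g₁ k = g₂ k} = N ∩ {k | g₁ k = g₂ k} := by
    ext k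
    exact ⟨fun ⟨⟨hkN, _⟩, hk⟩ => ⟨hkN, hk⟩, fun ⟨hkN, hk⟩ => ⟨⟨hkN, k, hkN, hk.symm⟩, hk⟩⟩
  exact mem_of_mem_closure_of_isClosed_inter (s := {k | g₁ k = g₂ k}) hk₀ hN (hMN ▸ hM)

theorem isClosed_setOf_eq [T2Space K] [LocallyCompactSpace K] (hX : KCSpace X)
    (h₁ : Continuous g₁) (h₂ : Continuous g₂) : IsClosed {k | g₁ k = g₂ k} := by
  refine isClosed_of_closure_subset fun k₀ hk₀ => ?_
  by_cases hfin₂ : g₂ k₀ = ∞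
  · by_cases hfin₁ : g₁ k₀ = ∞
    · exact hfin₁.trans hfin₂.symm
    have hk₀' : k₀ ∈ closure {k | g₂ k = g₁ k} := by simpa only [eq_comm] using hk₀
    exact (eq_of_mem_closure_setOf_eq hX h₂ h₁ hk₀' hfin₁).symm
  · exact eq_of_mem_closure_setOf_eq hX h₁ h₂ hk₀ hfin₂

end OnePoint

/-- The one-point compactification of any KC space is k₂-Hausdorff. -/
theorem onePoint_of_kc_is_k2Hausdorff (X : Type u) [TopologicalSpace X] (h : KCSpace X) :
    K2Hausdorff (OnePoint X) := fun _ _ _ _ _ hf =>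
  OnePoint.isClosed_setOf_eq h (continuous_fst.comp hf) (continuous_snd.comp hf)
end
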